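/- arXiv:quant-ph/0312010 — 6 statements merged into one kernel-verified Lean document; each statement's English description precedes it below -/
import Mathlib

section
/- Let x and y be probability vectors with the same number of entries such that x is majorized by y. Then for every probability vector z (of any size), the tensor product x⊗z is majorized by y⊗z. -/
open Finset

/-- Sum of the `l` largest entries of `x` (maximum over subsets of size `l`),
counted with multiplicity: this is `S_l(x)` from the paper. -/
noncomputable def topSum {ι : Type*} [Fintype ι] (x : ι → ℝ) (l : ℕ) : ℝ :=
  sSup {s : ℝ | ∃ A : Finset ι, A.card = l ∧ s = ∑ i ∈ A, x i}

/-- Sum of the `l` smallest entries of `x` (minimum over subsets of size `l`). -/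
noncomputable def botSum {ι : Type*} [Fintype ι] (x : ι → ℝ) (l : ℕ) : ℝ :=
  sInf {s : ℝ | ∃ A : Finset ι, A.card = l ∧ s = ∑ i ∈ A, x i}

/-- `x` is majorized by `y` (written `x ≺ y`): for every `1 ≤ l ≤ N`,
the sum of the `l` largest entries of `x` is at most that of `y`. -/
def Majorized {ι : Type*} [Fintype ι] (x y : ι → ℝ) : Prop :=
  ∀ l : ℕ, 1 ≤ l → l ≤ Fintype.card ι → topSum x l ≤ topSum y l

/-- Tensor product of two vectors: all pairwise products of entries. -/
def tensor {ι κ : Type*} (x : ι → ℝ) (z : κ → ℝ) : ι × κ → ℝ :=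
  fun p => x p.1 * z p.2

/-- `p`-fold tensor power of a vector. -/
def tensorPow {ι : Type*} (x : ι → ℝ) (p : ℕ) : (Fin p → ι) → ℝ :=
  fun f => ∏ j, x (f j)

/-- Sum of the first `l` entries of a vector `x : Fin n → ℝ`. -/
def prefixSum {n : ℕ} (x : Fin n → ℝ) (l : ℕ) : ℝ :=
  ∑ j ∈ Finset.univ.filter (fun j : Fin n => (j : ℕ) < l), x j

/-- Sum of the entries of `x : Fin n → ℝ` from index `l` (0-based) on. -/
def suffixSum {n : ℕ} (x : Fin n → ℝ) (l : ℕ) : ℝ :=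
  ∑ j ∈ Finset.univ.filter (fun j : Fin n => l ≤ (j : ℕ)), x j

/-- `E_l(x) = 1 - S_{l-1}(x)`: the sum of the entries of the probability vector `x`
from the `l`-th largest to the smallest. -/
noncomputable def Evec {ι : Type*} [Fintype ι] (x : ι → ℝ) (l : ℕ) : ℝ :=
  1 - topSum x (l - 1)

/-- Vidal conversion probability `P(x → y) = min_{1 ≤ l ≤ N} E_l(x)/E_l(y)`. -/
noncomputable def vidalP {ι : Type*} [Fintype ι] (x y : ι → ℝ) : ℝ :=
  sInf {r : ℝ | ∃ l : ℕ, 1 ≤ l ∧ l ≤ Fintype.card ι ∧ r = Evec x l / Evec y l}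

/-- Nonincreasing rearrangement of the entries of `x`, as a list. -/
noncomputable def sortedDesc {ι : Type*} [Fintype ι] (x : ι → ℝ) : List ℝ :=
  ((Finset.univ.val.map x).sort (· ≤ ·)).reverse

section Aux
variable {ι : Type*} [Fintype ι]

lemma topSum_set_eq (x : ι → ℝ) (m : ℕ) :
    {s : ℝ | ∃ A : Finset ι, A.card = m ∧ s = ∑ i ∈ A, x i}
      = ↑(((Finset.univ : Finset ι).powersetCard m).image (fun A => ∑ i ∈ A, x i)) := by
  ext s
  simp only [Set.mem_setOf_eq, Finset.coe_image, Set.mem_image, Finset.mem_coe,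
    Finset.mem_powersetCard]
  constructor
  · rintro ⟨A, hA, rfl⟩; exact ⟨A, ⟨Finset.subset_univ A, hA⟩, rfl⟩
  · rintro ⟨A, ⟨-, hA⟩, rfl⟩; exact ⟨A, hA, rfl⟩

lemma le_topSum (x : ι → ℝ) {m : ℕ} {A : Finset ι} (hA : A.card = m) :
    ∑ i ∈ A, x i ≤ topSum x m := by
  apply le_csSup
  · rw [topSum_set_eq]; exact (Finset.finite_toSet _).bddAbove
  · exact ⟨A, hA, rfl⟩

lemma topSum_mem (x : ι → ℝ) {m : ℕ} (hm : m ≤ Fintype.card ι) :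
    ∃ A : Finset ι, A.card = m ∧ topSum x m = ∑ i ∈ A, x i := by
  obtain ⟨A, -, hA⟩ := Finset.exists_subset_card_eq
    (show m ≤ (Finset.univ : Finset ι).card by simpa using hm)
  have hne : (((Finset.univ : Finset ι).powersetCard m).image
      (fun A => ∑ i ∈ A, x i)).Nonempty :=
    ⟨∑ i ∈ A, x i, Finset.mem_image.2 ⟨A, Finset.mem_powersetCard.2 ⟨Finset.subset_univ A, hA⟩, rfl⟩⟩
  have : topSum x m ∈ (((Finset.univ : Finset ι).powersetCard m).image
      (fun A => ∑ i ∈ A, x i)) := by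
    rw [topSum, topSum_set_eq, hne.csSup_eq_max']
    exact Finset.max'_mem _ hne
  obtain ⟨B, hB, hBs⟩ := Finset.mem_image.1 this
  exact ⟨B, (Finset.mem_powersetCard.1 hB).2, hBs.symm⟩

lemma topSum_zero (x : ι → ℝ) : topSum x 0 = 0 := by
  have : {s : ℝ | ∃ A : Finset ι, A.card = 0 ∧ s = ∑ i ∈ A, x i} = {0} := by
    ext s
    simp only [Set.mem_setOf_eq, Finset.card_eq_zero, Set.mem_singleton_iff]
    constructor
    · rintro ⟨A, rfl, rfl⟩; simp
    · rintro rfl; exact ⟨∅, rfl, by simp⟩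
  rw [topSum, this, csSup_singleton]

end Aux

theorem stmt_0 {N M : ℕ} (x y : Fin N → ℝ) (z : Fin M → ℝ)
    (hx0 : ∀ i, 0 ≤ x i) (hx1 : ∑ i, x i = 1)
    (hy0 : ∀ i, 0 ≤ y i) (hy1 : ∑ i, y i = 1)
    (hz0 : ∀ i, 0 ≤ z i) (hz1 : ∑ i, z i = 1)
    (hxy : Majorized x y) :
    Majorized (tensor x z) (tensor y z) := by
  have hxy' : ∀ m : ℕ, m ≤ N → topSum x m ≤ topSum y m := by
    intro m hm
    rcases Nat.eq_zero_or_pos m with rfl | hpos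
    · rw [topSum_zero, topSum_zero]
    · exact hxy m hpos (by simpa using hm)
  intro l hl1 hl2
  have hcard : l ≤ Fintype.card (Fin N × Fin M) := hl2
  obtain ⟨A, hAcard, hAsum⟩ := topSum_mem (tensor x z) hcard
  rw [hAsum]
  -- fiber sizes
  set m : Fin M → ℕ := fun j => (A.filter (fun p => p.2 = j)).card with hm
  have hfib : ∀ j, m j ≤ N := by
    intro j
    have : (A.filter (fun p => p.2 = j)).card ≤ Fintype.card (Fin N) := by
      have hinj : Set.InjOn (Prod.fst : Fin N × Fin M → Fin N) ↑(A.filter (fun p => p.2 = j)) := by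
        intro p hp q hq hpq
        simp only [Finset.coe_filter, Set.mem_setOf_eq] at hp hq
        exact Prod.ext hpq (hp.2.trans hq.2.symm)
      calc (A.filter (fun p => p.2 = j)).card
          = ((A.filter (fun p => p.2 = j)).image Prod.fst).card :=
            (Finset.card_image_of_injOn hinj).symm
        _ ≤ Fintype.card (Fin N) := by
            rw [← Finset.card_univ]
            exact Finset.card_le_card (Finset.subset_univ _)
    simpa using this
  -- choose optimal sets for y
  have hexists : ∀ j, ∃ B : Finset (Fin N), B.card = m j ∧ topSum y (m j) = ∑ i ∈ B, y i :=
    fun j => topSum_mem y (by simpa using hfib j)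
  choose B hBcard hBsum using hexists
  -- the comparison set C
  set emb : (j : Fin M) → Fin N ↪ Fin N × Fin M :=
    fun j => ⟨fun i => (i, j), fun a b h => (Prod.mk.injEq _ _ _ _ ▸ h).1⟩ with hemb
  set C : Finset (Fin N × Fin M) := Finset.univ.biUnion (fun j => (B j).map (emb j)) with hC
  have hdisj : ∀ j₁ ∈ (Finset.univ : Finset (Fin M)), ∀ j₂ ∈ Finset.univ, j₁ ≠ j₂ →
      Disjoint ((B j₁).map (emb j₁)) ((B j₂).map (emb j₂)) := by
    intro j₁ _ j₂ _ hne
    rw [Finset.disjoint_left]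
    rintro ⟨a, b⟩ h1 h2
    simp only [Finset.mem_map, hemb, Function.Embedding.coeFn_mk, Prod.mk.injEq] at h1 h2
    obtain ⟨_, _, _, rfl⟩ := h1
    obtain ⟨_, _, _, h⟩ := h2
    exact hne (by simp_all)
  have hCcard : C.card = l := by
    rw [hC, Finset.card_biUnion hdisj]
    have : ∀ j, ((B j).map (emb j)).card = m j := by
      intro j; rw [Finset.card_map, hBcard]
    rw [Finset.sum_congr rfl fun j _ => this j]
    rw [hm]
    rw [← Finset.card_eq_sum_card_fiberwise (fun p _ => Finset.mem_univ p.2)]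
    exact hAcard
  -- main inequality chain
  have step1 : ∑ p ∈ A, tensor x z p ≤ ∑ p ∈ C, tensor y z p := by
    have hA' : ∑ p ∈ A, tensor x z p
        = ∑ j, ∑ p ∈ A.filter (fun p => p.2 = j), tensor x z p :=
      (Finset.sum_fiberwise_of_maps_to (fun p _ => Finset.mem_univ p.2) _).symm
    have hCsum : ∑ p ∈ C, tensor y z p = ∑ j, z j * topSum y (m j) := by
      rw [hC, Finset.sum_biUnion hdisj]
      refine Finset.sum_congr rfl fun j _ => ?_
      rw [Finset.sum_map]
      simp only [hemb, Function.Embedding.coeFn_mk, tensor]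
      rw [hBsum j, Finset.mul_sum]
      exact Finset.sum_congr rfl fun i _ => mul_comm _ _
    rw [hA', hCsum]
    refine Finset.sum_le_sum fun j _ => ?_
    have hfilt : ∑ p ∈ A.filter (fun p => p.2 = j), tensor x z p
        = z j * ∑ p ∈ A.filter (fun p => p.2 = j), x p.1 := by
      rw [Finset.mul_sum]
      refine Finset.sum_congr rfl fun p hp => ?_
      have : p.2 = j := (Finset.mem_filter.1 hp).2
      simp [tensor, this, mul_comm]
    rw [hfilt]
    have hinj : ∀ p ∈ A.filter (fun p => p.2 = j), ∀ q ∈ A.filter (fun p => p.2 = j),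
        p.1 = q.1 → p = q := by
      intro p hp q hq hpq
      exact Prod.ext hpq (((Finset.mem_filter.1 hp).2).trans ((Finset.mem_filter.1 hq).2).symm)
    have himg : ∑ p ∈ A.filter (fun p => p.2 = j), x p.1
        = ∑ i ∈ (A.filter (fun p => p.2 = j)).image Prod.fst, x i :=
      (Finset.sum_image hinj).symm
    have hicard : ((A.filter (fun p => p.2 = j)).image Prod.fst).card = m j := by
      apply Finset.card_image_of_injOn
      intro p hp q hq h
      exact hinj p (Finset.mem_coe.1 hp) q (Finset.mem_coe.1 hq) h
    have h1 : ∑ p ∈ A.filter (fun p => p.2 = j), x p.1 ≤ topSum x (m j) := by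
      rw [himg]; exact le_topSum x hicard
    have h2 : topSum x (m j) ≤ topSum y (m j) := hxy' (m j) (hfib j)
    exact mul_le_mul_of_nonneg_left (h1.trans h2) (hz0 j)
  exact step1.trans (le_topSum (tensor y z) hCcard)
end

section
/- (Lemma 3, first part) Let ψ and φ be probability vectors with sorted entries α_1 ≥ … ≥ α_n ≥ 0 and β_1 ≥ … ≥ β_n ≥ 0 respectively, and let c be a probability vector with sorted entries γ_1 ≥ … ≥ γ_k > 0. If ψ⊗c is majorized by φ⊗c (i.e. c is a catalyst for the transformation of ψ to φ), then for every l ∈ L_{ψ,φ} it holds that γ_1·β_{l+1} > β_l·γ_k (i.e. γ_1/γ_k > β_l/β_{l+1}). -/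
open Finset

lemma aux_sum_le_sum_of_card_eq {α : Type*} [DecidableEq α] (x : α → ℝ) (A B : Finset α)
    (hcard : A.card = B.card) (c : ℝ) (hB : ∀ b ∈ B, c ≤ x b) (hA : ∀ a ∉ B, x a ≤ c) :
    ∑ a ∈ A, x a ≤ ∑ b ∈ B, x b := by
  have h1 : ∑ a ∈ A, x a = ∑ a ∈ A ∩ B, x a + ∑ a ∈ A \ B, x a :=
    (Finset.sum_inter_add_sum_sdiff A B x).symm
  have h2 : ∑ a ∈ B, x a = ∑ a ∈ B ∩ A, x a + ∑ a ∈ B \ A, x a :=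
    (Finset.sum_inter_add_sum_sdiff B A x).symm
  have hcards : (A \ B).card = (B \ A).card := by
    have := Finset.card_inter_add_card_sdiff A B
    have := Finset.card_inter_add_card_sdiff B A
    rw [Finset.inter_comm B A] at this
    omega
  have h3 : ∑ a ∈ A \ B, x a ≤ (A \ B).card • c :=
    Finset.sum_le_card_nsmul _ _ _ (fun a ha => hA a (Finset.mem_sdiff.mp ha).2)
  have h4 : (B \ A).card • c ≤ ∑ a ∈ B \ A, x a :=
    Finset.card_nsmul_le_sum _ _ _ (fun a ha => hB a (Finset.mem_sdiff.mp ha).1)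
  rw [Finset.inter_comm B A] at h2
  rw [h1, h2]
  have h5 : ((A \ B).card • c : ℝ) = (B \ A).card • c := by rw [hcards]
  have := h3.trans (le_of_eq h5)
  linarith [this.trans h4]

lemma aux_le_topSum {ι : Type*} [Fintype ι] (x : ι → ℝ) (hx : ∀ i, 0 ≤ x i) (A : Finset ι) :
    ∑ i ∈ A, x i ≤ topSum x A.card := by
  apply le_csSup
  · exact ⟨∑ i, x i, fun s ⟨C, _, hs⟩ => hs ▸
      Finset.sum_le_sum_of_subset_of_nonneg (Finset.subset_univ C) (fun i _ _ => hx i)⟩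
  · exact ⟨A, rfl, rfl⟩

lemma aux_topSum_le {ι : Type*} [Fintype ι] (x : ι → ℝ) (m : ℕ) (hm : m ≤ Fintype.card ι)
    (c : ℝ) (h : ∀ A : Finset ι, A.card = m → ∑ i ∈ A, x i ≤ c) : topSum x m ≤ c := by
  apply csSup_le
  · obtain ⟨A, _, hA⟩ := Finset.exists_subset_card_eq (s := (Finset.univ : Finset ι)) (n := m) (by simpa using hm)
    exact ⟨_, A, hA, rfl⟩
  · rintro s ⟨A, hA, rfl⟩; exact h A hA

theorem stmt_3 {n k : ℕ} (hk : 1 ≤ k) (ψ φ : Fin n → ℝ) (γ : Fin k → ℝ)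
    (hψa : Antitone ψ) (hφa : Antitone φ) (hγa : Antitone γ)
    (hψ0 : ∀ i, 0 ≤ ψ i) (hψ1 : ∑ i, ψ i = 1)
    (hφ0 : ∀ i, 0 ≤ φ i) (hφ1 : ∑ i, φ i = 1)
    (hγ0 : ∀ i, 0 < γ i) (hγ1 : ∑ i, γ i = 1)
    (hcat : Majorized (tensor ψ γ) (tensor φ γ)) :
    ∀ l : ℕ, ∀ _hl1 : 1 ≤ l, ∀ hln : l < n,
      prefixSum ψ l > prefixSum φ l →
      γ ⟨0, by omega⟩ * φ ⟨l, hln⟩ > φ ⟨l - 1, by omega⟩ * γ ⟨k - 1, by omega⟩ := by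
  intro l hl1 hln hpre
  by_contra hcon
  push_neg at hcon
  -- the block B = {i < l} × univ
  set s : Finset (Fin n) := Finset.univ.filter (fun j : Fin n => (j : ℕ) < l) with hs
  have hscard : s.card = l := by
    have : s = Finset.Iio (⟨l, hln⟩ : Fin n) := by
      ext j; simp [hs, Finset.mem_Iio, Fin.lt_def]
    rw [this, Fin.card_Iio]
  set B : Finset (Fin n × Fin k) := s ×ˢ Finset.univ with hB
  have hBcard : B.card = l * k := by
    rw [hB, Finset.card_product, hscard, Finset.card_univ, Fintype.card_fin]
  have hsumφ : ∑ p ∈ B, tensor φ γ p = prefixSum φ l := by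
    rw [hB, Finset.sum_product]
    simp only [tensor]
    calc ∑ i ∈ s, ∑ j, φ i * γ j = ∑ i ∈ s, φ i * ∑ j, γ j := by
          simp [Finset.mul_sum]
      _ = prefixSum φ l := by rw [hγ1]; simp [prefixSum, hs]
  have hsumψ : ∑ p ∈ B, tensor ψ γ p = prefixSum ψ l := by
    rw [hB, Finset.sum_product]
    simp only [tensor]
    calc ∑ i ∈ s, ∑ j, ψ i * γ j = ∑ i ∈ s, ψ i * ∑ j, γ j := by
          simp [Finset.mul_sum]
      _ = prefixSum ψ l := by rw [hγ1]; simp [prefixSum, hs]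
  set c : ℝ := φ ⟨l - 1, by omega⟩ * γ ⟨k - 1, by omega⟩ with hc
  have hBlow : ∀ p ∈ B, c ≤ tensor φ γ p := by
    intro p hp
    rw [hB, Finset.mem_product] at hp
    have hp1 : (p.1 : ℕ) < l := by simpa [hs] using hp.1
    have h1 : φ ⟨l - 1, by omega⟩ ≤ φ p.1 := hφa (by simp [Fin.le_def]; omega)
    have h2 : γ ⟨k - 1, by omega⟩ ≤ γ p.2 := hγa (by simp [Fin.le_def]; omega)
    exact mul_le_mul h1 h2 (hγ0 _).le (hφ0 _)
  have hBout : ∀ p ∉ B, tensor φ γ p ≤ c := by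
    intro p hp
    rw [hB, Finset.mem_product] at hp
    have hp1 : l ≤ (p.1 : ℕ) := by
      by_contra h
      exact hp ⟨by simp [hs]; omega, Finset.mem_univ _⟩
    have h1 : φ p.1 ≤ φ ⟨l, hln⟩ := hφa (by simp [Fin.le_def]; omega)
    have h2 : γ p.2 ≤ γ ⟨0, by omega⟩ := hγa (by simp [Fin.le_def])
    calc tensor φ γ p = φ p.1 * γ p.2 := rfl
      _ ≤ φ ⟨l, hln⟩ * γ ⟨0, by omega⟩ :=
          mul_le_mul h1 h2 (hγ0 _).le (hφ0 _)
      _ = γ ⟨0, by omega⟩ * φ ⟨l, hln⟩ := mul_comm _ _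
      _ ≤ c := hcon
  have htop1 : prefixSum ψ l ≤ topSum (tensor ψ γ) (l * k) := by
    rw [← hsumψ, ← hBcard]
    exact aux_le_topSum _ (fun p => mul_nonneg (hψ0 _) (hγ0 _).le) B
  have htop2 : topSum (tensor φ γ) (l * k) ≤ prefixSum φ l := by
    apply aux_topSum_le
    · simp only [Fintype.card_prod, Fintype.card_fin]
      exact Nat.mul_le_mul_right k (le_of_lt hln)
    · intro A hA
      rw [← hsumφ]
      exact aux_sum_le_sum_of_card_eq _ A B (by rw [hA, hBcard]) c hBlow hBout
  have hmaj := hcat (l * k) (Nat.one_le_iff_ne_zero.mpr (by positivity))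
    (by simp only [Fintype.card_prod, Fintype.card_fin]
        exact Nat.mul_le_mul_right k (le_of_lt hln))
  linarith
end

section
/- (Theorem 2, upper bound) Let x and y be probability vectors with n entries whose smallest entries are α_n and β_n respectively, with all entries of y positive. Then for every integer p ≥ 1 and every probability vector c with all entries positive (a candidate catalyst), the Vidal conversion probability satisfies P(x^{⊗p}⊗c → y^{⊗p}⊗c) ≤ (α_n/β_n)^p. -/
open Finset

lemma topSum_pred {ι : Type*} [Fintype ι] (z : ι → ℝ) (m : ℝ)
    (hz1 : ∑ i, z i = 1) (hm : IsLeast (Set.range z) m) :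
    topSum z (Fintype.card ι - 1) = 1 - m := by
  classical
  obtain ⟨i₀, hi₀⟩ := hm.1
  apply IsGreatest.csSup_eq
  constructor
  · refine ⟨{i₀}ᶜ, ?_, ?_⟩
    · simp [Finset.card_compl]
    · have h := Finset.sum_compl_add_sum {i₀} z
      rw [hz1] at h
      simp only [Finset.sum_singleton] at h
      rw [← hi₀]; linarith
  · rintro s ⟨A, hA, rfl⟩
    have hpos : 1 ≤ Fintype.card ι := Fintype.card_pos_iff.mpr ⟨i₀⟩
    have hcard : Aᶜ.card = 1 := by
      rw [Finset.card_compl, hA]; omega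
    obtain ⟨i₁, hi₁⟩ := Finset.card_eq_one.mp hcard
    have h := Finset.sum_compl_add_sum A z
    rw [hz1, hi₁, Finset.sum_singleton] at h
    have : m ≤ z i₁ := hm.2 ⟨i₁, rfl⟩
    linarith

theorem stmt_9 {n : ℕ} (x y : Fin n → ℝ) (αn βn : ℝ)
    (hx0 : ∀ i, 0 ≤ x i) (hx1 : ∑ i, x i = 1)
    (hy0 : ∀ i, 0 < y i) (hy1 : ∑ i, y i = 1)
    (hα : IsLeast (Set.range x) αn) (hβ : IsLeast (Set.range y) βn) :
    ∀ p : ℕ, 1 ≤ p → ∀ (M : ℕ) (c : Fin M → ℝ),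
      (∀ i, 0 < c i) → (∑ i, c i = 1) →
      vidalP (tensor (tensorPow x p) c) (tensor (tensorPow y p) c)
        ≤ (αn / βn) ^ p := by
  intro p hp M c hc0 hc1
  classical
  obtain ⟨i₀, hi₀⟩ := hα.1
  obtain ⟨iβ, hiβ⟩ := hβ.1
  -- M ≥ 1
  have hM : 0 < M := by
    by_contra h
    push_neg at h
    interval_cases M
    simp at hc1
  obtain ⟨j₀, -, hj₀⟩ := Finset.exists_min_image (Finset.univ : Finset (Fin M))
    c ⟨⟨0, hM⟩, Finset.mem_univ _⟩
  set cm := c j₀ with hcm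
  have hcmpos : 0 < cm := hc0 j₀
  have hα0 : 0 ≤ αn := hi₀ ▸ hx0 i₀
  have hβ0 : 0 < βn := hiβ ▸ hy0 iβ
  set ι := (Fin p → Fin n) × Fin M
  set x' : ι → ℝ := tensor (tensorPow x p) c with hx'
  set y' : ι → ℝ := tensor (tensorPow y p) c with hy'
  -- sums equal 1
  have sum_tensor : ∀ (z : Fin n → ℝ), (∑ i, z i = 1) →
      ∑ q : ι, tensor (tensorPow z p) c q = 1 := by
    intro z hz
    rw [Fintype.sum_prod_type]
    simp only [tensor, tensorPow]
    rw [← Finset.sum_mul_sum]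
    have h2 := Fintype.prod_sum (fun (_ : Fin p) (i : Fin n) => z i)
    rw [← h2, hz, hc1]
    simp
  -- least elements of tensor vectors
  have least_tensor : ∀ (z : Fin n → ℝ) (m : ℝ), (∀ i, 0 ≤ z i) →
      IsLeast (Set.range z) m →
      IsLeast (Set.range (tensor (tensorPow z p) c)) (m ^ p * cm) := by
    intro z m hz0 hmz
    obtain ⟨iz, hiz⟩ := hmz.1
    constructor
    · exact ⟨(fun _ => iz, j₀), by simp [tensor, tensorPow, hiz, hcm]⟩
    · rintro s ⟨⟨f, j⟩, rfl⟩
      have hm0 : 0 ≤ m := hiz ▸ hz0 iz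
      have h1 : m ^ p ≤ ∏ k, z (f k) := by
        calc m ^ p = ∏ _k : Fin p, m := by simp
        _ ≤ ∏ k, z (f k) :=
          Finset.prod_le_prod (fun _ _ => hm0) (fun k _ => hmz.2 ⟨f k, rfl⟩)
      have hprod0 : 0 ≤ ∏ k, z (f k) := Finset.prod_nonneg fun k _ => hz0 (f k)
      exact mul_le_mul h1 (hj₀ j (Finset.mem_univ _)) (le_of_lt hcmpos) hprod0
  have hx'sum := sum_tensor x hx1
  have hy'sum := sum_tensor y hy1
  have hx'least := least_tensor x αn hx0 hα
  have hy'least := least_tensor y βn (fun i => (hy0 i).le) hβ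
  set N := Fintype.card ι with hN
  have hN1 : 1 ≤ N := Fintype.card_pos_iff.mpr ⟨(fun _ => i₀, j₀)⟩
  have hEx : Evec x' N = αn ^ p * cm := by
    rw [Evec, topSum_pred x' _ hx'sum hx'least]; ring
  have hEy : Evec y' N = βn ^ p * cm := by
    rw [Evec, topSum_pred y' _ hy'sum hy'least]; ring
  -- the candidate element
  have hmem : Evec x' N / Evec y' N ∈
      {r : ℝ | ∃ l : ℕ, 1 ≤ l ∧ l ≤ Fintype.card ι ∧ r = Evec x' l / Evec y' l} :=
    ⟨N, hN1, le_refl _, rfl⟩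
  have hbdd : BddBelow {r : ℝ | ∃ l : ℕ, 1 ≤ l ∧ l ≤ Fintype.card ι ∧ r = Evec x' l / Evec y' l} := by
    have hsub : {r : ℝ | ∃ l : ℕ, 1 ≤ l ∧ l ≤ Fintype.card ι ∧ r = Evec x' l / Evec y' l}
        ⊆ (fun l => Evec x' l / Evec y' l) '' Set.Icc 1 N := by
      rintro r ⟨l, h1, h2, rfl⟩
      exact ⟨l, ⟨h1, h2⟩, rfl⟩
    exact (((Set.finite_Icc 1 N).image _).subset hsub).bddBelow
  have : vidalP x' y' ≤ Evec x' N / Evec y' N := csInf_le hbdd hmem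
  rw [hEx, hEy, mul_div_mul_right _ _ (ne_of_gt hcmpos), ← div_pow] at this
  exact this
end

section
/- (Corollary 1) Let x and y be probability vectors with n entries whose smallest entries are α_n and β_n respectively, with all entries of y positive, and suppose the Vidal conversion probability satisfies P(x → y) = α_n/β_n. Then for every integer p ≥ 1: P(x^{⊗p} → y^{⊗p}) = (α_n/β_n)^p, and for every probability vector c with all entries positive, P(x^{⊗p}⊗c → y^{⊗p}⊗c) ≤ (α_n/β_n)^p; hence the supremum over all catalysts c of P(x^{⊗p}⊗c → y^{⊗p}⊗c) equals (α_n/β_n)^p. -/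
open Finset

section BotSum
variable {ι κ : Type*} [Fintype ι] [Fintype κ] {x : ι → ℝ} {l : ℕ}

lemma botSet_finite (x : ι → ℝ) (l : ℕ) :
    {s : ℝ | ∃ A : Finset ι, A.card = l ∧ s = ∑ i ∈ A, x i}.Finite := by
  have : {s : ℝ | ∃ A : Finset ι, A.card = l ∧ s = ∑ i ∈ A, x i} ⊆
      (fun A : Finset ι => ∑ i ∈ A, x i) '' Set.univ := by
    rintro s ⟨A, _, rfl⟩; exact ⟨A, trivial, rfl⟩
  exact (Set.finite_univ.image _).subset this

lemma botSet_nonempty (x : ι → ℝ) (h : l ≤ Fintype.card ι) :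
    {s : ℝ | ∃ A : Finset ι, A.card = l ∧ s = ∑ i ∈ A, x i}.Nonempty := by
  obtain ⟨A, -, hA⟩ := Finset.exists_subset_card_eq (s := (Finset.univ : Finset ι)) (by simpa using h)
  exact ⟨∑ i ∈ A, x i, A, hA, rfl⟩

lemma botSum_le {A : Finset ι} (h : A.card = l) : botSum x l ≤ ∑ i ∈ A, x i :=
  csInf_le (botSet_finite x l).bddBelow ⟨A, h, rfl⟩

lemma botSum_mem (h : l ≤ Fintype.card ι) :
    ∃ A : Finset ι, A.card = l ∧ botSum x l = ∑ i ∈ A, x i :=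
  (botSet_nonempty x h).csInf_mem (botSet_finite x l)

lemma botSum_zero : botSum x 0 = 0 := by
  obtain ⟨A, hc, hs⟩ := botSum_mem (x := x) (l := 0) (Nat.zero_le _)
  rw [hs, Finset.card_eq_zero.mp hc, Finset.sum_empty]

lemma botSum_nonneg (hx : ∀ i, 0 ≤ x i) (h : l ≤ Fintype.card ι) : 0 ≤ botSum x l := by
  obtain ⟨A, _, hs⟩ := botSum_mem (x := x) h
  rw [hs]; exact Finset.sum_nonneg fun i _ => hx i

lemma botSum_pos (hx : ∀ i, 0 < x i) (h1 : 1 ≤ l) (h : l ≤ Fintype.card ι) :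
    0 < botSum x l := by
  obtain ⟨A, hc, hs⟩ := botSum_mem (x := x) h
  rw [hs]
  apply Finset.sum_pos (fun i _ => hx i)
  rw [← Finset.card_pos, hc]; exact h1

lemma botSum_comp_equiv (e : ι ≃ κ) (x : κ → ℝ) (l : ℕ) :
    botSum (x ∘ e) l = botSum x l := by
  unfold botSum
  congr 1
  ext s
  constructor
  · rintro ⟨A, hc, rfl⟩
    exact ⟨A.map e.toEmbedding, by rw [Finset.card_map, hc],
      by rw [Finset.sum_map]; rfl⟩
  · rintro ⟨B, hc, rfl⟩
    refine ⟨B.map e.symm.toEmbedding, by rw [Finset.card_map, hc], ?_⟩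
    rw [Finset.sum_map]
    exact Finset.sum_congr rfl fun i _ => by simp

lemma botSum_one {a : ℝ} (h : IsLeast (Set.range x) a) : botSum x 1 = a := by
  obtain ⟨⟨i0, hi0⟩, hlb⟩ := h
  apply le_antisymm
  · have := botSum_le (x := x) (A := {i0}) (Finset.card_singleton i0)
    simpa [hi0] using this
  · have hcard : 1 ≤ Fintype.card ι := Fintype.card_pos_iff.mpr ⟨i0⟩
    obtain ⟨A, hc, hs⟩ := botSum_mem (x := x) hcard
    obtain ⟨i, rfl⟩ := Finset.card_eq_one.mp hc
    rw [hs, Finset.sum_singleton]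
    exact hlb ⟨i, rfl⟩

end BotSum

section TopSum
variable {ι : Type*} [Fintype ι] {x : ι → ℝ} {k : ℕ}

lemma topSum_eq (h : k ≤ Fintype.card ι) :
    topSum x k = (∑ i, x i) - botSum x (Fintype.card ι - k) := by
  classical
  have key : IsGreatest {s : ℝ | ∃ A : Finset ι, A.card = k ∧ s = ∑ i ∈ A, x i}
      ((∑ i, x i) - botSum x (Fintype.card ι - k)) := by
    constructor
    · obtain ⟨A, hc, hs⟩ := botSum_mem (x := x) (l := Fintype.card ι - k) (Nat.sub_le _ _)
      refine ⟨Aᶜ, ?_, ?_⟩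
      · rw [Finset.card_compl, hc, Nat.sub_sub_self h]
      · rw [hs, sub_eq_iff_eq_add, ← Finset.sum_compl_add_sum A x]
    · rintro s ⟨B, hc, rfl⟩
      have h1 : botSum x (Fintype.card ι - k) ≤ ∑ i ∈ Bᶜ, x i :=
        botSum_le (by rw [Finset.card_compl, hc])
      have h2 : ∑ i ∈ B, x i + ∑ i ∈ Bᶜ, x i = ∑ i, x i := Finset.sum_add_sum_compl B x
      linarith
  exact key.csSup_eq

lemma evec_eq (hx1 : ∑ i, x i = 1) {l : ℕ} (h1 : 1 ≤ l) (h2 : l ≤ Fintype.card ι) :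
    Evec x l = botSum x (Fintype.card ι - l + 1) := by
  have hk : l - 1 ≤ Fintype.card ι := le_trans (Nat.sub_le _ _) h2
  rw [Evec, topSum_eq hk, hx1]
  have : Fintype.card ι - (l - 1) = Fintype.card ι - l + 1 := by omega
  rw [this]; ring
end TopSum

section Chain
variable {ι : Type*} [Fintype ι]

lemma exists_chain (x : ι → ℝ) : ∀ t, t ≤ Fintype.card ι →
    ∃ f : ℕ → Finset ι, (∀ s, s ≤ t → (f s).card = s ∧ ∑ i ∈ f s, x i = botSum x s) ∧
      ∀ s, s + 1 ≤ t → f s ⊆ f (s + 1) := by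
  classical
  intro t
  induction t with
  | zero =>
    intro _
    exact ⟨fun _ => ∅, fun s hs => by
      simp [Nat.le_zero.mp hs, botSum_zero], fun s hs => by omega⟩
  | succ t ih =>
    intro ht
    obtain ⟨f, hf, hmono⟩ := ih (by omega)
    obtain ⟨C, hCc, hCs⟩ := botSum_mem (x := x) (l := t + 1) ht
    have hft : (f t).card = t := (hf t le_rfl).1
    have hex : ∃ a, a ∈ C ∧ a ∉ f t := by
      by_contra hcon
      push_neg at hcon
      have : C ⊆ f t := fun a ha => hcon a ha
      have := Finset.card_le_card this
      omega
    obtain ⟨a, haC, haf⟩ := hex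
    set A' := insert a (f t) with hA'
    have hA'c : A'.card = t + 1 := by rw [hA', Finset.card_insert_of_notMem haf, hft]
    have hA's : ∑ i ∈ A', x i = botSum x (t + 1) := by
      apply le_antisymm
      · rw [hA', Finset.sum_insert haf, hCs, ← Finset.add_sum_erase C x haC]
        have h1 : ∑ i ∈ f t, x i ≤ ∑ i ∈ C.erase a, x i := by
          rw [(hf t le_rfl).2]
          exact botSum_le (by rw [Finset.card_erase_of_mem haC, hCc]; rfl)
        linarith
      · exact botSum_le hA'c
    refine ⟨fun s => if s ≤ t then f s else A', fun s hs => ?_, fun s hs => ?_⟩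
    · by_cases h : s ≤ t
      · simp only [if_pos h]; exact hf s h
      · have hs1 : s = t + 1 := by omega
        subst hs1
        simp only [if_neg h]
        exact ⟨hA'c, hA's⟩
    · by_cases h : s + 1 ≤ t
      · simp only [if_pos (by omega : s ≤ t), if_pos h]; exact hmono s h
      · have hst : s = t := by omega
        subst hst
        simp only [if_pos (le_refl s), if_neg (show ¬ s + 1 ≤ s by omega)]
        exact Finset.subset_insert a (f s)

lemma exists_sorted [Nonempty ι] (x : ι → ℝ) :
    ∃ a : ℕ → ι, (∀ s t, s < t → t < Fintype.card ι → a s ≠ a t) ∧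
      ∀ t, t ≤ Fintype.card ι → botSum x t = ∑ s ∈ Finset.range t, x (a s) := by
  classical
  set N := Fintype.card ι with hN
  obtain ⟨f, hf, hmono⟩ := exists_chain x N le_rfl
  have hstep : ∀ s, s < N → ∃ b, b ∉ f s ∧ insert b (f s) = f (s + 1) := by
    intro s hs
    have h1 := (hf s (by omega)).1
    have h2 := (hf (s+1) (by omega)).1
    have hsub := hmono s (by omega)
    obtain ⟨b, hb1, hb2⟩ := Finset.exists_of_ssubset (Finset.ssubset_iff_subset_ne.mpr
      ⟨hsub, fun h => by rw [h] at h1; omega⟩)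
    refine ⟨b, hb2, ?_⟩
    apply Finset.eq_of_subset_of_card_le
    · intro i hi
      rcases Finset.mem_insert.mp hi with h | h
      · rwa [h]
      · exact hsub h
    · rw [h2, Finset.card_insert_of_notMem hb2, h1]
  choose! b hb1 hb2 using hstep
  refine ⟨b, ?_, ?_⟩
  · have hfmono : ∀ s t, s ≤ t → t ≤ N → f s ⊆ f t := by
      intro s t hst
      induction t, hst using Nat.le_induction with
      | base => intro _; exact subset_rfl
      | succ t hst iht => exact fun htN i hi => hmono t htN (iht (by omega) hi)
    intro s t hst htN heq
    have h1 : b s ∈ f (s + 1) := by rw [← hb2 s (by omega)]; exact Finset.mem_insert_self _ _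
    have h2 : b s ∈ f t := hfmono (s+1) t (by omega) (by omega) h1
    rw [heq] at h2
    exact hb1 t htN h2
  · intro t htN
    induction t with
    | zero => simp [botSum_zero]
    | succ t iht =>
      rw [← (hf (t+1) htN).2, ← hb2 t (by omega), Finset.sum_insert (hb1 t (by omega)),
        Finset.sum_range_succ, (hf t (by omega)).2, iht (by omega)]
      ring
end Chain

lemma botSum_tensor_ge {ι κ : Type*} [Fintype ι] [Fintype κ] [Nonempty ι] [Nonempty κ]
    (x y : ι → ℝ) (x' y' : κ → ℝ) (r r' : ℝ)
    (hx' : ∀ j, 0 ≤ x' j) (hy : ∀ i, 0 ≤ y i) (hy' : ∀ j, 0 ≤ y' j)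
    (hr : 0 ≤ r) (hr' : 0 ≤ r')
    (hxy : ∀ m, m ≤ Fintype.card ι → r * botSum y m ≤ botSum x m)
    (hxy' : ∀ m, m ≤ Fintype.card κ → r' * botSum y' m ≤ botSum x' m)
    (m : ℕ) (hm : m ≤ Fintype.card (ι × κ)) :
    r * r' * botSum (tensor y y') m ≤ botSum (tensor x x') m := by
  classical
  set N₁ := Fintype.card ι with hN₁
  set N₂ := Fintype.card κ with hN₂
  obtain ⟨B, hBc, hBs⟩ := botSum_mem (x := tensor x x') hm
  -- fibers of B over κ
  set Bj : κ → Finset ι := fun j => (B.filter (fun p => p.2 = j)).image Prod.fst with hBj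
  set b : κ → ℕ := fun j => (Bj j).card with hb
  have hinj : ∀ j : κ, Set.InjOn Prod.fst (B.filter (fun p => p.2 = j) : Set (ι × κ)) := by
    intro j p hp q hq hpq
    simp only [Finset.coe_filter, Set.mem_setOf_eq] at hp hq
    exact Prod.ext hpq (hp.2.trans hq.2.symm)
  have hbcard : ∀ j, (B.filter (fun p => p.2 = j)).card = b j := by
    intro j
    rw [hb, hBj]
    exact (Finset.card_image_of_injOn (hinj j)).symm
  have hbN : ∀ j, b j ≤ N₁ := fun j => by
    rw [hb]; exact Finset.card_le_card (Finset.subset_univ _) |>.trans (le_of_eq rfl)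
  have hsumb : ∑ j, b j = m := by
    rw [← hBc]
    rw [Finset.card_eq_sum_card_fiberwise (f := Prod.snd) (t := Finset.univ)
      (fun p _ => Finset.mem_univ _)]
    exact Finset.sum_congr rfl fun j _ => (hbcard j).symm
  -- step 1: decompose the sum over B
  have hdec : ∑ p ∈ B, tensor x x' p = ∑ j, x' j * ∑ i ∈ Bj j, x i := by
    rw [← Finset.sum_fiberwise B Prod.snd (tensor x x')]
    refine Finset.sum_congr rfl fun j _ => ?_
    rw [hBj, Finset.sum_image (fun p hp q hq => hinj j (by simpa using hp) (by simpa using hq)),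
      Finset.mul_sum]
    refine Finset.sum_congr rfl fun p hp => ?_
    have : p.2 = j := (Finset.mem_filter.mp hp).2
    rw [tensor, this]; ring
  -- step 2: lower bound by botSum x (b j), then by r * botSum y (b j)
  have hstep2 : r * ∑ j, x' j * botSum y (b j) ≤ ∑ p ∈ B, tensor x x' p := by
    rw [hdec, Finset.mul_sum]
    refine Finset.sum_le_sum fun j _ => ?_
    have h1 : botSum x (b j) ≤ ∑ i ∈ Bj j, x i := botSum_le rfl
    have h2 : r * botSum y (b j) ≤ botSum x (b j) := hxy (b j) (hbN j)
    have := hx' j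
    nlinarith
  -- sorted enumerations
  obtain ⟨a, hainj, hag⟩ := exists_sorted y
  obtain ⟨a', hainj', hag'⟩ := exists_sorted y'
  -- conjugate counts
  set c : ℕ → ℕ := fun t => (Finset.univ.filter (fun j : κ => t < b j)).card with hc
  have hcN : ∀ t, c t ≤ N₂ := fun t => Finset.card_le_card (Finset.subset_univ _)
  have hrange : ∀ j, (Finset.range N₁).filter (fun t => t < b j) = Finset.range (b j) := by
    intro j
    ext t
    simp only [Finset.mem_filter, Finset.mem_range]
    constructor
    · rintro ⟨_, h⟩; exact h
    · intro h; exact ⟨lt_of_lt_of_le h (hbN j), h⟩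
  -- step 3: Abel swap
  have hswap : ∑ j, x' j * botSum y (b j)
      = ∑ t ∈ Finset.range N₁, y (a t) * ∑ j ∈ Finset.univ.filter (fun j => t < b j), x' j := by
    have h1 : ∀ j : κ, x' j * botSum y (b j)
        = ∑ t ∈ Finset.range N₁, if t < b j then x' j * y (a t) else 0 := by
      intro j
      rw [hag (b j) (hbN j), ← Finset.sum_filter, hrange j, Finset.mul_sum]
    rw [Finset.sum_congr rfl fun j _ => h1 j, Finset.sum_comm]
    refine Finset.sum_congr rfl fun t _ => ?_
    rw [← Finset.sum_filter, Finset.mul_sum]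
    refine Finset.sum_congr rfl fun j _ => mul_comm _ _
  -- step 4: bound inner sums
  have hstep4 : ∑ t ∈ Finset.range N₁, y (a t) * (r' * botSum y' (c t))
      ≤ ∑ j, x' j * botSum y (b j) := by
    rw [hswap]
    refine Finset.sum_le_sum fun t _ => ?_
    refine mul_le_mul_of_nonneg_left ?_ (hy (a t))
    calc r' * botSum y' (c t) ≤ botSum x' (c t) := hxy' (c t) (hcN t)
      _ ≤ ∑ j ∈ Finset.univ.filter (fun j => t < b j), x' j := botSum_le rfl
  -- step 6: total count
  have hsumc : ∑ t ∈ Finset.range N₁, c t = m := by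
    have : ∀ t, c t = ∑ j : κ, if t < b j then 1 else 0 := fun t =>
      Finset.card_filter _ _
    rw [Finset.sum_congr rfl fun t _ => this t, Finset.sum_comm, ← hsumb]
    refine Finset.sum_congr rfl fun j _ => ?_
    rw [← Finset.sum_filter, hrange j]
    simp
  -- step 5+7: Young diagram subset
  set T : Finset (ℕ × ℕ) := (Finset.range N₁ ×ˢ Finset.range N₂).filter
      (fun p => p.2 < c p.1) with hT
  have hTcard : T.card = m := by
    rw [hT, ← hsumc]
    rw [Finset.card_filter]
    rw [Finset.sum_product]
    refine Finset.sum_congr rfl fun t _ => ?_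
    rw [← Finset.sum_filter]
    have : (Finset.range N₂).filter (fun s => s < c t) = Finset.range (c t) := by
      ext s
      simp only [Finset.mem_filter, Finset.mem_range]
      exact ⟨fun ⟨_, h⟩ => h, fun h => ⟨lt_of_lt_of_le h (hcN t), h⟩⟩
    rw [this]
    simp
  have haInj : ∀ p ∈ T, ∀ q ∈ T, (fun p : ℕ × ℕ => (a p.1, a' p.2)) p
      = (fun p : ℕ × ℕ => (a p.1, a' p.2)) q → p = q := by
    rintro ⟨t, s⟩ hp ⟨t', s'⟩ hq h
    simp only [hT, Finset.mem_filter, Finset.mem_product, Finset.mem_range] at hp hq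
    simp only [Prod.mk.injEq] at h
    have ht : t = t' := by
      by_contra hne
      rcases Nat.lt_or_ge t t' with hlt | hge
      · exact hainj t t' hlt hq.1.1 h.1
      · exact hainj t' t (by omega) hp.1.1 h.1.symm
    have hs : s = s' := by
      by_contra hne
      rcases Nat.lt_or_ge s s' with hlt | hge
      · exact hainj' s s' hlt hq.1.2 h.2
      · exact hainj' s' s (by omega) hp.1.2 h.2.symm
    rw [ht, hs]
  set Y : Finset (ι × κ) := T.image (fun p => (a p.1, a' p.2)) with hY
  have hYcard : Y.card = m := by rw [hY, Finset.card_image_of_injOn haInj, hTcard]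
  have hYsum : ∑ q ∈ Y, tensor y y' q
      = ∑ t ∈ Finset.range N₁, y (a t) * botSum y' (c t) := by
    rw [hY, Finset.sum_image haInj, hT]
    rw [Finset.sum_filter, Finset.sum_product]
    refine Finset.sum_congr rfl fun t _ => ?_
    rw [hag' (c t) (hcN t), Finset.mul_sum, ← Finset.sum_filter]
    have : (Finset.range N₂).filter (fun s => s < c t) = Finset.range (c t) := by
      ext s
      simp only [Finset.mem_filter, Finset.mem_range]
      exact ⟨fun ⟨_, h⟩ => h, fun h => ⟨lt_of_lt_of_le h (hcN t), h⟩⟩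
    rw [this]
    rfl
  have hbot : botSum (tensor y y') m ≤ ∑ t ∈ Finset.range N₁, y (a t) * botSum y' (c t) := by
    rw [← hYsum]; exact botSum_le hYcard
  -- combine
  rw [hBs]
  calc r * r' * botSum (tensor y y') m
      = r * (r' * botSum (tensor y y') m) := by ring
    _ ≤ r * ∑ t ∈ Finset.range N₁, y (a t) * (r' * botSum y' (c t)) := by
        refine mul_le_mul_of_nonneg_left ?_ hr
        calc r' * botSum (tensor y y') m
            ≤ r' * ∑ t ∈ Finset.range N₁, y (a t) * botSum y' (c t) :=
              mul_le_mul_of_nonneg_left hbot hr'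
          _ = ∑ t ∈ Finset.range N₁, y (a t) * (r' * botSum y' (c t)) := by
              rw [Finset.mul_sum]; exact Finset.sum_congr rfl fun t _ => by ring
    _ ≤ r * ∑ j, x' j * botSum y (b j) := mul_le_mul_of_nonneg_left hstep4 hr
    _ ≤ ∑ p ∈ B, tensor x x' p := hstep2

section Assemble

lemma vidal_eq {ι : Type*} [Fintype ι] [Nonempty ι] (X Y : ι → ℝ) (R : ℝ)
    (hX1 : ∑ i, X i = 1) (hY0 : ∀ i, 0 < Y i) (hY1 : ∑ i, Y i = 1)
    (hlow : ∀ m, 1 ≤ m → m ≤ Fintype.card ι → R * botSum Y m ≤ botSum X m)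
    (hmem : botSum X 1 = R * botSum Y 1) :
    vidalP X Y = R := by
  have hN : 1 ≤ Fintype.card ι := Fintype.card_pos
  have key : IsLeast {r : ℝ | ∃ l : ℕ, 1 ≤ l ∧ l ≤ Fintype.card ι ∧ r = Evec X l / Evec Y l} R := by
    constructor
    · refine ⟨Fintype.card ι, hN, le_rfl, ?_⟩
      rw [evec_eq hX1 hN le_rfl, evec_eq hY1 hN le_rfl, Nat.sub_self, hmem]
      have hpos : (0:ℝ) < botSum Y 1 := botSum_pos hY0 le_rfl hN
      rw [mul_div_assoc, div_self hpos.ne', mul_one]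
    · rintro r ⟨l, hl1, hl2, rfl⟩
      rw [evec_eq hX1 hl1 hl2, evec_eq hY1 hl1 hl2]
      have hm1 : 1 ≤ Fintype.card ι - l + 1 := by omega
      have hm2 : Fintype.card ι - l + 1 ≤ Fintype.card ι := by omega
      have hpos : 0 < botSum Y (Fintype.card ι - l + 1) := botSum_pos hY0 hm1 hm2
      rw [le_div_iff₀ hpos]
      exact hlow _ hm1 hm2
  exact key.csInf_eq

lemma isLeast_tensor {ι κ : Type*} {u : ι → ℝ} {v : κ → ℝ} {a b : ℝ}
    (ha : IsLeast (Set.range u) a) (hb : IsLeast (Set.range v) b)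
    (ha0 : 0 ≤ a) (hb0 : 0 ≤ b) :
    IsLeast (Set.range (tensor u v)) (a * b) := by
  obtain ⟨⟨i0, hi0⟩, hau⟩ := ha
  obtain ⟨⟨j0, hj0⟩, hbv⟩ := hb
  constructor
  · exact ⟨(i0, j0), by rw [tensor]; rw [hi0, hj0]⟩
  · rintro z ⟨⟨i, j⟩, rfl⟩
    exact mul_le_mul (hau ⟨i, rfl⟩) (hbv ⟨j, rfl⟩) hb0 (ha0.trans (hau ⟨i, rfl⟩))

lemma isLeast_comp_equiv {ι κ : Type*} {v : κ → ℝ} {a : ℝ} (e : ι ≃ κ)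
    (h : IsLeast (Set.range v) a) : IsLeast (Set.range (v ∘ e)) a := by
  rwa [Set.range_comp, e.surjective.range_eq, Set.image_univ]

lemma tensorPow_succ {ι : Type*} (x : ι → ℝ) (p : ℕ) :
    tensorPow x (p + 1) = tensor x (tensorPow x p) ∘ ((Fin.consEquiv (fun _ : Fin (p + 1) => ι)).symm) := by
  funext f
  simp only [tensorPow, tensor, Function.comp_apply, Fin.consEquiv, Equiv.coe_fn_symm_mk, Fin.tail]
  exact Fin.prod_univ_succ _

lemma sum_tensor {ι κ : Type*} [Fintype ι] [Fintype κ] (u : ι → ℝ) (v : κ → ℝ) :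
    ∑ q : ι × κ, tensor u v q = (∑ i, u i) * (∑ j, v j) := by
  rw [Fintype.sum_prod_type, Finset.sum_mul_sum]
  rfl

lemma sum_tensorPow {ι : Type*} [Fintype ι] (x : ι → ℝ) (hx1 : ∑ i, x i = 1) (p : ℕ) :
    ∑ f, tensorPow x p f = 1 := by
  induction p with
  | zero => simp [tensorPow]
  | succ p ih =>
    rw [tensorPow_succ]
    rw [show ∑ f, (tensor x (tensorPow x p) ∘ ((Fin.consEquiv (fun _ : Fin (p + 1) => ι)).symm)) f
      = ∑ q : ι × (Fin p → ι), tensor x (tensorPow x p) q from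
        Equiv.sum_comp ((Fin.consEquiv (fun _ : Fin (p + 1) => ι)).symm) _]
    rw [sum_tensor, hx1, ih, mul_one]

lemma isLeast_tensorPow {ι : Type*} {x : ι → ℝ} {a : ℝ}
    (ha : IsLeast (Set.range x) a) (ha0 : 0 ≤ a) (p : ℕ) :
    IsLeast (Set.range (tensorPow x p)) (a ^ p) := by
  induction p with
  | zero =>
    constructor
    · obtain ⟨⟨i0, _⟩, _⟩ := ha
      exact ⟨fun _ => i0, by simp [tensorPow]⟩
    · rintro z ⟨f, rfl⟩; simp [tensorPow]
  | succ p ih =>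
    rw [tensorPow_succ, pow_succ, mul_comm]
    exact isLeast_comp_equiv _ (isLeast_tensor ha ih ha0 (pow_nonneg ha0 p))

lemma botSum_tensorPow_succ {ι : Type*} [Fintype ι] (x : ι → ℝ) (p : ℕ) (m : ℕ) :
    botSum (tensorPow x (p + 1)) m = botSum (tensor x (tensorPow x p)) m := by
  rw [tensorPow_succ]
  exact botSum_comp_equiv _ _ _

end Assemble



theorem stmt_11 {n : ℕ} (x y : Fin n → ℝ) (αn βn : ℝ)
    (hx0 : ∀ i, 0 ≤ x i) (hx1 : ∑ i, x i = 1)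
    (hy0 : ∀ i, 0 < y i) (hy1 : ∑ i, y i = 1)
    (hα : IsLeast (Set.range x) αn) (hβ : IsLeast (Set.range y) βn)
    (hP : vidalP x y = αn / βn) :
    ∀ p : ℕ, 1 ≤ p →
      vidalP (tensorPow x p) (tensorPow y p) = (αn / βn) ^ p ∧
      (∀ (M : ℕ) (c : Fin M → ℝ), (∀ i, 0 < c i) → (∑ i, c i = 1) →
        vidalP (tensor (tensorPow x p) c) (tensor (tensorPow y p) c)
          ≤ (αn / βn) ^ p) ∧
      IsLUB {r : ℝ | ∃ (M : ℕ) (c : Fin M → ℝ), (∀ i, 0 < c i) ∧ (∑ i, c i = 1) ∧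
          r = vidalP (tensor (tensorPow x p) c) (tensor (tensorPow y p) c)}
        ((αn / βn) ^ p) := by
  intro p hp
  have hn0 : n ≠ 0 := by rintro rfl; simp at hy1
  haveI : Nonempty (Fin n) := ⟨⟨0, Nat.pos_of_ne_zero hn0⟩⟩
  have hα0 : 0 ≤ αn := by obtain ⟨i, hi⟩ := hα.1; exact hi ▸ hx0 i
  have hβ0 : 0 < βn := by obtain ⟨j, hj⟩ := hβ.1; exact hj ▸ hy0 j
  set r := αn / βn with hr
  have hr0 : 0 ≤ r := div_nonneg hα0 hβ0.le
  have hcard : Fintype.card (Fin n) = n := Fintype.card_fin n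
  -- base hypothesis from hP
  have hbase : ∀ m, m ≤ Fintype.card (Fin n) → r * botSum y m ≤ botSum x m := by
    intro m hm
    rcases Nat.eq_zero_or_pos m with rfl | hm1
    · simp [botSum_zero]
    · have hl1 : 1 ≤ Fintype.card (Fin n) - m + 1 := by omega
      have hl2 : Fintype.card (Fin n) - m + 1 ≤ Fintype.card (Fin n) := by omega
      have hbdd : BddBelow {s : ℝ | ∃ l : ℕ, 1 ≤ l ∧ l ≤ Fintype.card (Fin n) ∧
          s = Evec x l / Evec y l} := by
        refine ⟨0, ?_⟩
        rintro s ⟨l, h1, h2, rfl⟩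
        rw [evec_eq hx1 h1 h2, evec_eq hy1 h1 h2]
        exact div_nonneg (botSum_nonneg hx0 (by omega)) (botSum_pos hy0 (by omega) (by omega)).le
      have hle : vidalP x y ≤ Evec x (Fintype.card (Fin n) - m + 1) /
          Evec y (Fintype.card (Fin n) - m + 1) :=
        csInf_le hbdd ⟨Fintype.card (Fin n) - m + 1, hl1, hl2, rfl⟩
      rw [hP, evec_eq hx1 hl1 hl2, evec_eq hy1 hl1 hl2,
        (show Fintype.card (Fin n) - (Fintype.card (Fin n) - m + 1) + 1 = m by omega)] at hle
      have hpos : 0 < botSum y m := botSum_pos hy0 hm1 hm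
      rw [le_div_iff₀ hpos] at hle
      exact hle
  -- tensor power hypothesis
  have hpow : ∀ q : ℕ, ∀ m, m ≤ Fintype.card (Fin q → Fin n) →
      r ^ q * botSum (tensorPow y q) m ≤ botSum (tensorPow x q) m := by
    intro q
    induction q with
    | zero =>
      intro m hm
      have hc1 : Fintype.card (Fin 0 → Fin n) = 1 := by simp
      rw [hc1] at hm
      rcases Nat.le_one_iff_eq_zero_or_eq_one.mp hm with rfl | rfl
      · simp [botSum_zero]
      · rw [botSum_one (isLeast_tensorPow hα hα0 0), botSum_one (isLeast_tensorPow hβ hβ0.le 0)]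
        simp
    | succ q ih =>
      intro m hm
      rw [botSum_tensorPow_succ x, botSum_tensorPow_succ y, pow_succ, mul_comm (r ^ q) r]
      refine botSum_tensor_ge x y (tensorPow x q) (tensorPow y q) r (r ^ q)
        (fun f => Finset.prod_nonneg fun j _ => hx0 _)
        (fun i => (hy0 i).le)
        (fun f => (Finset.prod_pos fun j _ => hy0 _).le)
        hr0 (pow_nonneg hr0 q) hbase ih m ?_
      have h1 : Fintype.card (Fin (q + 1) → Fin n) = Fintype.card (Fin n × (Fin q → Fin n)) := by
        rw [Fintype.card_fun, Fintype.card_prod, Fintype.card_fun]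
        simp [pow_succ, mul_comm]
      rwa [h1] at hm
  have hY0p : ∀ f, 0 < tensorPow y p f := fun f => Finset.prod_pos fun j _ => hy0 _
  -- part 1
  have part1 : vidalP (tensorPow x p) (tensorPow y p) = r ^ p := by
    refine vidal_eq _ _ _ (sum_tensorPow x hx1 p) hY0p (sum_tensorPow y hy1 p)
      (fun m _ hm2 => hpow p m hm2) ?_
    rw [botSum_one (isLeast_tensorPow hα hα0 p), botSum_one (isLeast_tensorPow hβ hβ0.le p),
      hr, div_pow, div_mul_cancel₀ _ (pow_ne_zero p hβ0.ne')]
  -- part 2 (with equality)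
  have part2 : ∀ (M : ℕ) (c : Fin M → ℝ), (∀ i, 0 < c i) → (∑ i, c i = 1) →
      vidalP (tensor (tensorPow x p) c) (tensor (tensorPow y p) c) = r ^ p := by
    intro M c hc0 hc1
    have hM : M ≠ 0 := by rintro rfl; simp at hc1
    haveI : Nonempty (Fin M) := ⟨⟨0, Nat.pos_of_ne_zero hM⟩⟩
    obtain ⟨j0, -, hj0min⟩ := Finset.exists_min_image Finset.univ c
      ⟨Classical.arbitrary _, Finset.mem_univ _⟩
    have hcleast : IsLeast (Set.range c) (c j0) :=
      ⟨⟨j0, rfl⟩, by rintro z ⟨j, rfl⟩; exact hj0min j (Finset.mem_univ j)⟩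
    refine vidal_eq _ _ _ ?_ ?_ ?_ ?_ ?_
    · rw [sum_tensor, sum_tensorPow x hx1 p, hc1, mul_one]
    · exact fun q => mul_pos (hY0p q.1) (hc0 q.2)
    · rw [sum_tensor, sum_tensorPow y hy1 p, hc1, mul_one]
    · intro m _ hm2
      have := botSum_tensor_ge (tensorPow x p) (tensorPow y p) c c (r ^ p) 1
        (fun j => (hc0 j).le)
        (fun f => (hY0p f).le)
        (fun j => (hc0 j).le)
        (pow_nonneg hr0 p) zero_le_one
        (hpow p) (fun m' _ => by rw [one_mul]) m hm2
      rwa [mul_one] at this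
    · rw [botSum_one (isLeast_tensor (isLeast_tensorPow hα hα0 p) hcleast
          (pow_nonneg hα0 p) (hc0 j0).le),
        botSum_one (isLeast_tensor (isLeast_tensorPow hβ hβ0.le p) hcleast
          (pow_nonneg hβ0.le p) (hc0 j0).le),
        hr, div_pow]
      field_simp
  refine ⟨part1, fun M c hc0 hc1 => le_of_eq (part2 M c hc0 hc1), ?_, ?_⟩
  · rintro s ⟨M, c, hc0, hc1, rfl⟩
    exact le_of_eq (part2 M c hc0 hc1)
  · intro b hb
    exact hb ⟨1, fun _ => (1:ℝ), fun _ => one_pos, by simp,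
      (part2 1 (fun _ => (1:ℝ)) (fun _ => one_pos) (by simp)).symm⟩
end

section
/- Let β be a probability vector with sorted entries β_1 ≥ … ≥ β_n ≥ 0 and γ a probability vector with sorted entries γ_1 ≥ … ≥ γ_k ≥ 0, and let 1 ≤ l_0 < n and 1 ≤ i_0 < k. If β_{l_0}·γ_{i_0} ≥ β_1·γ_{i_0+1} and β_{l_0}·γ_{i_0} ≥ β_{l_0+1}·γ_1, then the sum of the i_0·l_0 largest entries of β⊗γ equals (∑_{j=1}^{l_0} β_j)·(∑_{j=1}^{i_0} γ_j). -/
/-!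
The `i₀ l₀` largest entries of `β ⊗ γ` are the products `β_a γ_b` with `a ≤ l₀` and `b ≤ i₀`.
Since `β ⊗ γ` is antitone for the product order, each of them is at least
`m = β_{l₀} γ_{i₀}`, while an entry outside this block is dominated by `β_1 γ_{i₀+1}` or by
`β_{l₀+1} γ_1`, hence by `m` under the two hypotheses. A block separated from its complement by
a threshold realises the top sum of its size, by an exchange argument.
-/

open Finset

theorem Finset.sum_le_sum_of_card_eq_of_threshold {ι : Type*} [DecidableEq ι] (x : ι → ℝ)
    {A R : Finset ι} {m : ℝ} (hcard : #A = #R)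
    (hR : ∀ i ∈ R, m ≤ x i) (hRc : ∀ i ∉ R, x i ≤ m) :
    ∑ i ∈ A, x i ≤ ∑ i ∈ R, x i := by
  suffices ∑ i ∈ A, (x i - m) ≤ ∑ i ∈ R, (x i - m) by
    simpa only [sum_sub_distrib, sum_const, hcard, sub_le_sub_iff_right] using this
  calc ∑ i ∈ A, (x i - m)
      ≤ ∑ i ∈ A ∩ R, (x i - m) := by
        rw [← sum_inter_add_sum_sdiff A R]
        exact add_le_of_nonpos_right
          (sum_nonpos fun i hi => sub_nonpos.2 (hRc i (mem_sdiff.1 hi).2))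
    _ ≤ ∑ i ∈ R, (x i - m) :=
        sum_le_sum_of_subset_of_nonneg inter_subset_right fun i hi _ => sub_nonneg.2 (hR i hi)

theorem topSum_card_eq_sum_of_threshold {ι : Type*} [Fintype ι] (x : ι → ℝ)
    {R : Finset ι} {m : ℝ} (hR : ∀ i ∈ R, m ≤ x i) (hRc : ∀ i ∉ R, x i ≤ m) :
    topSum x #R = ∑ i ∈ R, x i := by
  classical
  refine IsGreatest.csSup_eq ⟨⟨R, rfl, rfl⟩, ?_⟩
  rintro _ ⟨A, hA, rfl⟩
  exact sum_le_sum_of_card_eq_of_threshold x hA hR hRc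

theorem sum_tensor_product {ι κ : Type*} (x : ι → ℝ) (z : κ → ℝ) (s : Finset ι) (t : Finset κ) :
    ∑ p ∈ s ×ˢ t, tensor x z p = (∑ i ∈ s, x i) * ∑ j ∈ t, z j := by
  rw [sum_product, sum_mul_sum]
  rfl

theorem Antitone.tensor {ι κ : Type*} [Preorder ι] [Preorder κ] {x : ι → ℝ} {z : κ → ℝ}
    (hx : Antitone x) (hz : Antitone z) (hx0 : ∀ i, 0 ≤ x i) (hz0 : ∀ j, 0 ≤ z j) :
    Antitone (tensor x z) :=
  fun _ _ h => mul_le_mul (hx h.1) (hz h.2) (hz0 _) (hx0 _)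

theorem stmt_13 {n k : ℕ} (β : Fin n → ℝ) (γ : Fin k → ℝ)
    (hβa : Antitone β) (hγa : Antitone γ)
    (hβ0 : ∀ i, 0 ≤ β i)
    (hγ0 : ∀ i, 0 ≤ γ i)
    (l0 i0 : ℕ) (hl0n : l0 < n) (hi0k : i0 < k)
    (h1 : β ⟨l0 - 1, by omega⟩ * γ ⟨i0 - 1, by omega⟩ ≥ β ⟨0, by omega⟩ * γ ⟨i0, hi0k⟩)
    (h2 : β ⟨l0 - 1, by omega⟩ * γ ⟨i0 - 1, by omega⟩ ≥ β ⟨l0, hl0n⟩ * γ ⟨0, by omega⟩) :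
    topSum (tensor β γ) (i0 * l0) = prefixSum β l0 * prefixSum γ i0 := by
  classical
  set R := ({j : Fin n | (j : ℕ) < l0} : Finset _) ×ˢ ({j : Fin k | (j : ℕ) < i0} : Finset _)
  have hcard : #R = i0 * l0 := by
    simp [R, Fin.card_filter_val_lt, hl0n.le, hi0k.le, mul_comm]
  have hanti := hβa.tensor hγa hβ0 hγ0
  have hsum := topSum_card_eq_sum_of_threshold (tensor β γ) (R := R)
    (m := β ⟨l0 - 1, by omega⟩ * γ ⟨i0 - 1, by omega⟩) ?_ ?_
  · rwa [hcard, sum_tensor_product] at hsum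
  · rintro ⟨a, b⟩ hab
    simp only [R, mem_product, mem_filter, mem_univ, true_and] at hab
    exact hanti (show (a, b) ≤ (⟨l0 - 1, _⟩, ⟨i0 - 1, _⟩) from
      ⟨Fin.le_def.2 (show (a : ℕ) ≤ l0 - 1 by omega),
        Fin.le_def.2 (show (b : ℕ) ≤ i0 - 1 by omega)⟩)
  · rintro ⟨a, b⟩ hab
    simp only [R, mem_product, mem_filter, mem_univ, true_and, not_and, not_lt] at hab
    by_cases ha : (a : ℕ) < l0
    · exact le_trans (hanti (show ((⟨0, _⟩, ⟨i0, hi0k⟩) : Fin n × Fin k) ≤ (a, b) from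
        ⟨Fin.le_def.2 (Nat.zero_le _), Fin.le_def.2 (hab ha)⟩)) h1
    · exact le_trans (hanti (show ((⟨l0, hl0n⟩, ⟨0, _⟩) : Fin n × Fin k) ≤ (a, b) from
        ⟨Fin.le_def.2 (not_lt.1 ha), Fin.le_def.2 (Nat.zero_le _)⟩)) h2
end

section
/- Let β be a probability vector with sorted entries β_1 ≥ … ≥ β_n ≥ 0 and γ a probability vector with sorted entries γ_1 ≥ … ≥ γ_k ≥ 0, and let 1 ≤ l_0 < n and 1 ≤ i_0 < k. If β_{l_0+1}·γ_{i_0+1} ≤ β_{l_0}·γ_k and β_{l_0+1}·γ_{i_0+1} ≤ β_n·γ_{i_0}, then the sum of the (n−l_0)·(k−i_0) smallest entries of β⊗γ equals (∑_{j=l_0+1}^{n} β_j)·(∑_{j=i_0+1}^{k} γ_j). -/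
open Finset

theorem stmt_14 {n k : ℕ} (β : Fin n → ℝ) (γ : Fin k → ℝ)
    (hβa : Antitone β) (hγa : Antitone γ)
    (hβ0 : ∀ i, 0 ≤ β i) (hβ1 : ∑ i, β i = 1)
    (hγ0 : ∀ i, 0 ≤ γ i) (hγ1 : ∑ i, γ i = 1)
    (l0 i0 : ℕ) (hl01 : 1 ≤ l0) (hl0n : l0 < n) (hi01 : 1 ≤ i0) (hi0k : i0 < k)
    (h1 : β ⟨l0, hl0n⟩ * γ ⟨i0, hi0k⟩ ≤ β ⟨l0 - 1, by omega⟩ * γ ⟨k - 1, by omega⟩)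
    (h2 : β ⟨l0, hl0n⟩ * γ ⟨i0, hi0k⟩ ≤ β ⟨n - 1, by omega⟩ * γ ⟨i0 - 1, by omega⟩) :
    botSum (tensor β γ) ((n - l0) * (k - i0)) = suffixSum β l0 * suffixSum γ i0 := by
  classical
  set c := β ⟨l0, hl0n⟩ * γ ⟨i0, hi0k⟩ with hc
  set Bs : Finset (Fin n) := Finset.univ.filter (fun j : Fin n => l0 ≤ (j : ℕ)) with hBs
  set Gs : Finset (Fin k) := Finset.univ.filter (fun j : Fin k => i0 ≤ (j : ℕ)) with hGs
  set A0 : Finset (Fin n × Fin k) := Bs ×ˢ Gs with hA0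
  have hBsIci : Bs = Finset.Ici (⟨l0, hl0n⟩ : Fin n) := by
    ext j; simp [hBs, Fin.le_def]
  have hGsIci : Gs = Finset.Ici (⟨i0, hi0k⟩ : Fin k) := by
    ext j; simp [hGs, Fin.le_def]
  have hcard : A0.card = (n - l0) * (k - i0) := by
    rw [hA0, Finset.card_product, hBsIci, hGsIci, Fin.card_Ici, Fin.card_Ici]
  -- every entry inside A0 is at most c
  have hin : ∀ p ∈ A0, tensor β γ p ≤ c := by
    rintro ⟨i, j⟩ hp
    simp only [hA0, Finset.mem_product, hBs, hGs, Finset.mem_filter] at hp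
    have h1' : β i ≤ β ⟨l0, hl0n⟩ := hβa (by simpa [Fin.le_def] using hp.1.2)
    have h2' : γ j ≤ γ ⟨i0, hi0k⟩ := hγa (by simpa [Fin.le_def] using hp.2.2)
    exact mul_le_mul h1' h2' (hγ0 _) (hβ0 _)
  -- every entry outside A0 is at least c
  have hout : ∀ p ∉ A0, c ≤ tensor β γ p := by
    rintro ⟨i, j⟩ hp
    simp only [hA0, Finset.mem_product, hBs, hGs, Finset.mem_filter, Finset.mem_univ,
      true_and, not_and_or, not_le] at hp
    rcases hp with hp | hp
    · refine h1.trans (mul_le_mul (hβa ?_) (hγa ?_) (hγ0 _) (hβ0 _))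
      · simp only [Fin.le_def]; omega
      · simp only [Fin.le_def]; omega
    · refine h2.trans (mul_le_mul (hβa ?_) (hγa ?_) (hγ0 _) (hβ0 _))
      · simp only [Fin.le_def]; omega
      · simp only [Fin.le_def]; omega
  -- A0 minimizes the sum among sets of the same cardinality
  have hmin : ∀ A : Finset (Fin n × Fin k), A.card = (n - l0) * (k - i0) →
      ∑ p ∈ A0, tensor β γ p ≤ ∑ p ∈ A, tensor β γ p := by
    intro A hA
    have hcards : (A0 \ A).card = (A \ A0).card := by
      have h1 := Finset.card_sdiff_add_card_inter A0 A
      have h2 := Finset.card_sdiff_add_card_inter A A0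
      rw [Finset.inter_comm] at h2
      omega
    have key : ∑ p ∈ A0 \ A, tensor β γ p ≤ ∑ p ∈ A \ A0, tensor β γ p := by
      calc ∑ p ∈ A0 \ A, tensor β γ p ≤ (A0 \ A).card • c :=
            Finset.sum_le_card_nsmul _ _ _ (fun p hp => hin p (Finset.mem_sdiff.mp hp).1)
        _ = (A \ A0).card • c := by rw [hcards]
        _ ≤ ∑ p ∈ A \ A0, tensor β γ p :=
            Finset.card_nsmul_le_sum _ _ _ (fun p hp => hout p (Finset.mem_sdiff.mp hp).2)
    have e1 : ∑ p ∈ A0, tensor β γ p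
        = ∑ p ∈ A0 \ A, tensor β γ p + ∑ p ∈ A0 ∩ A, tensor β γ p :=
      by rw [← Finset.sum_union (Finset.disjoint_sdiff_inter A0 A), Finset.sdiff_union_inter]
    have e2 : ∑ p ∈ A, tensor β γ p
        = ∑ p ∈ A \ A0, tensor β γ p + ∑ p ∈ A ∩ A0, tensor β γ p :=
      by rw [← Finset.sum_union (Finset.disjoint_sdiff_inter A A0), Finset.sdiff_union_inter]
    rw [e1, e2, Finset.inter_comm A A0]
    exact add_le_add_left key _
  have hleast : IsLeast {s : ℝ | ∃ A : Finset (Fin n × Fin k),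
      A.card = (n - l0) * (k - i0) ∧ s = ∑ p ∈ A, tensor β γ p} (∑ p ∈ A0, tensor β γ p) := by
    constructor
    · exact ⟨A0, hcard, rfl⟩
    · rintro s ⟨A, hA, rfl⟩
      exact hmin A hA
  rw [botSum, hleast.csInf_eq]
  rw [hA0, Finset.sum_product]
  simp only [tensor]
  rw [← Finset.sum_mul_sum]
  rfl
end
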